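/- arXiv:math/0312317 — 2 statements merged into one kernel-verified Lean document; each statement's English description precedes it below -/
import Mathlib

section
/- Suppose F : ℝ → ℝ → (ℝⁿ → ℝⁿ) consists of affine bijections satisfying the Sincov equation F_{τσ} ∘ F_{σρ} = F_{τρ}. Then there exist W : ℝ → GL(n,ℝ) and h : ℝ → ℝⁿ such that F_{τσ}(a) = W_τ(W_σ⁻¹(a) + h_τ − h_σ) for all τ, σ ∈ ℝ and a ∈ ℝⁿ. -/
theorem sincov_affine_factorization (n : ℕ)
    (F : ℝ → ℝ → (Fin n → ℝ) → (Fin n → ℝ))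
    (haff : ∀ τ σ : ℝ, ∃ (A : (Fin n → ℝ) ≃ₗ[ℝ] (Fin n → ℝ)) (b : Fin n → ℝ),
      ∀ a, F τ σ a = A a + b)
    (hF : ∀ τ σ ρ : ℝ, ∀ a : Fin n → ℝ, F τ σ (F σ ρ a) = F τ ρ a) :
    ∃ (W : ℝ → ((Fin n → ℝ) ≃ₗ[ℝ] (Fin n → ℝ))) (h : ℝ → Fin n → ℝ),
      ∀ τ σ : ℝ, ∀ a : Fin n → ℝ,
        F τ σ a = W τ ((W σ).symm a + h τ - h σ) := by
  choose A b hAb using fun τ => haff τ 0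
  refine ⟨A, fun τ => (A τ).symm (b τ), fun τ σ a => ?_⟩
  set x := (A σ).symm (a - b σ) with hx
  have hσ0 : F σ 0 x = a := by
    rw [hAb σ x, hx, (A σ).apply_symm_apply]; abel
  calc F τ σ a = F τ σ (F σ 0 x) := by rw [hσ0]
    _ = F τ 0 x := hF τ σ 0 x
    _ = A τ x + b τ := hAb τ x
    _ = A τ ((A σ).symm a + (A τ).symm (b τ) - (A σ).symm (b σ)) := by
        rw [hx, map_sub (A σ).symm]
        simp only [map_add, map_sub, (A τ).apply_symm_apply]
        abel
end

section
/- Let G : ℝ → (ℝⁿ → ℝⁿ) be a continuous one-parameter group of affine transformations (G_α ∘ G_β = G_{α+β}) and suppose H_ε := (1/(2ε))∫_{−ε}^{ε} G_β dβ is invertible for some ε > 0. Then for all α, G_α = (1/(2ε)) ∫_{α−ε}^{α+ε} G_γ ∘ H_ε⁻¹ dγ; in particular α ↦ G_α is continuously differentiable. -/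
/-!
Substituting `γ = α + β` and using the group law `G_{α+β} = G_α ∘ G_β`, the affine map `G_α`
comes out of the integral: `∫_{α-ε}^{α+ε} G_γ c dγ = 2ε · G_α (H_ε c)`. Taking `c = H_ε⁻¹ a`
writes `G_α a` as a moving-window integral of a continuous function, which is `C¹` in `α`
(its derivative is `f (α + ε) - f (α - ε)`). Hence `b_α = G_α 0` is `C¹`, and so is every
`A_α a = G_α a - G_α 0`, which in finite dimension makes `α ↦ A_α` itself `C¹`.
-/

open intervalIntegral

section MovingWindow

variable {E : Type*} [NormedAddCommGroup E] [NormedSpace ℝ E] [CompleteSpace E]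

theorem Continuous.contDiff_one_primitive {f : ℝ → E} (hf : Continuous f) (a : ℝ) :
    ContDiff ℝ 1 fun x => ∫ t in a..x, f t :=
  contDiff_one_iff_deriv.2
    ⟨fun x => (hf.integral_hasStrictDerivAt a x).hasDerivAt.differentiableAt,
      by rw [funext (hf.deriv_integral f a)]; exact hf⟩

theorem Continuous.contDiff_one_integral_sub_add {f : ℝ → E} (hf : Continuous f) (ε : ℝ) :
    ContDiff ℝ 1 fun α => ∫ γ in (α - ε)..(α + ε), f γ := by
  have hsplit : ∀ α, (∫ γ in (α - ε)..(α + ε), f γ) =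
      (∫ t in 0..(α + ε), f t) - ∫ t in 0..(α - ε), f t := fun α =>
    (integral_interval_sub_left (hf.intervalIntegrable _ _) (hf.intervalIntegrable _ _)).symm
  rw [funext hsplit]
  exact ((hf.contDiff_one_primitive 0).comp (contDiff_id.add contDiff_const)).sub
    ((hf.contDiff_one_primitive 0).comp (contDiff_id.sub contDiff_const))

end MovingWindow

section AffineFlow

variable {E : Type*} [NormedAddCommGroup E] [NormedSpace ℝ E] {A : ℝ → E →L[ℝ] E} {b : ℝ → E}

theorem intervalIntegral_affine_apply (hA : Continuous A) (hb : Continuous b) (s t : ℝ) (c : E) :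
    ∫ β in s..t, (A β c + b β) = (∫ β in s..t, A β) c + ∫ β in s..t, b β := by
  rw [integral_add ((hA.clm_apply continuous_const).intervalIntegrable _ _)
      (hb.intervalIntegrable _ _),
    ContinuousLinearMap.intervalIntegral_apply (hA.intervalIntegrable _ _)]

variable [CompleteSpace E]

theorem intervalIntegral_affine_flow_add_left (hA : Continuous A) (hb : Continuous b)
    (hgroup : ∀ α β : ℝ, ∀ a : E, A α (A β a + b β) + b α = A (α + β) a + b (α + β))
    (α s t : ℝ) (c : E) :
    ∫ γ in (α + s)..(α + t), (A γ c + b γ) = A α (∫ β in s..t, (A β c + b β)) + (t - s) • b α := by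
  have hG : Continuous fun β => A β c + b β := (hA.clm_apply continuous_const).add hb
  rw [← integral_comp_add_left (fun γ => A γ c + b γ) α]
  simp_rw [← hgroup α]
  rw [integral_add ((continuous_const.clm_apply hG).intervalIntegrable _ _)
      intervalIntegrable_const, intervalIntegral.integral_const,
    ContinuousLinearMap.intervalIntegral_comp_comm _ (hG.intervalIntegrable _ _)]

theorem affine_flow_apply_average (hA : Continuous A) (hb : Continuous b)
    (hgroup : ∀ α β : ℝ, ∀ a : E, A α (A β a + b β) + b α = A (α + β) a + b (α + β))
    {ε : ℝ} (hε : ε ≠ 0) (α : ℝ) (c : E) :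
    A α (((2 * ε)⁻¹ • ∫ β in (-ε)..ε, A β) c + (2 * ε)⁻¹ • ∫ β in (-ε)..ε, b β) + b α =
      (2 * ε)⁻¹ • ∫ γ in (α - ε)..(α + ε), (A γ c + b γ) := by
  rw [sub_eq_add_neg, intervalIntegral_affine_flow_add_left hA hb hgroup,
    intervalIntegral_affine_apply hA hb, smul_add, ← map_smul, smul_smul,
    show (2 * ε)⁻¹ * (ε - -ε) = 1 by field_simp; ring, one_smul, smul_add, smul_apply]

end AffineFlow

/-- If the average `H_ε = (1/(2ε)) ∫_{-ε}^{ε} G_β dβ` of a continuous affine one-parameter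
group `G_β(a) = A_β a + b_β` is invertible for some `ε > 0`, then
`G_α = (1/(2ε)) ∫_{α-ε}^{α+ε} G_γ ∘ H_ε⁻¹ dγ`; in particular `α ↦ G_α` is `C¹`. -/
theorem affine_group_integral_representation (n : ℕ)
    (A : ℝ → ((Fin n → ℝ) →L[ℝ] (Fin n → ℝ))) (b : ℝ → Fin n → ℝ)
    (hAc : Continuous A) (hbc : Continuous b)
    (hgroup : ∀ α β : ℝ, ∀ a : Fin n → ℝ,
      A α (A β a + b β) + b α = A (α + β) a + b (α + β))
    (ε : ℝ) (hε : 0 < ε)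
    (Hinv : (Fin n → ℝ) → (Fin n → ℝ))
    (hHinv : ∀ x : Fin n → ℝ,
      Hinv (((2 * ε)⁻¹ • ∫ β in (-ε)..ε, A β) x + (2 * ε)⁻¹ • ∫ β in (-ε)..ε, b β) = x ∧
      ((2 * ε)⁻¹ • ∫ β in (-ε)..ε, A β) (Hinv x) + ((2 * ε)⁻¹ • ∫ β in (-ε)..ε, b β) = x) :
    (∀ α : ℝ, ∀ a : Fin n → ℝ,
      A α a + b α = (2 * ε)⁻¹ • ∫ γ in (α - ε)..(α + ε), (A γ (Hinv a) + b γ)) ∧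
    ContDiff ℝ 1 A ∧ ContDiff ℝ 1 b := by
  have hrep : ∀ α a, A α a + b α = (2 * ε)⁻¹ • ∫ γ in (α - ε)..(α + ε), (A γ (Hinv a) + b γ) :=
    fun α a => by rw [← affine_flow_apply_average hAc hbc hgroup hε.ne', (hHinv a).2]
  have hG : ∀ a, ContDiff ℝ 1 fun α => A α a + b α := fun a => by
    rw [funext (hrep · a)]
    exact (contDiff_const (c := (2 * ε)⁻¹)).smul
      (((hAc.clm_apply continuous_const).add hbc).contDiff_one_integral_sub_add ε)
  have hb : ContDiff ℝ 1 b := by simpa using hG 0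
  exact ⟨hrep, contDiff_clm_apply_iff.2 fun a => by simpa using (hG a).sub hb, hb⟩
end
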